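/- Let n ≥ 4 be an integer, let h be a nonzero rational number and C a rational number, and let a, b, c, d be rational numbers. Set P(X) = (h/n!) · (∏_{j=1}^{n−4} (X + j)) · (X⁴ + aX³ + bX² + cX + d). Assume: (i) P(X) = (−1)^n · P(−(n−3) − X) as an identity of polynomials; (ii) the coefficient of X^{n−2} in P equals ((n−3)²·h + C) / (12·(n−2)!); (iii) P(0) = 1. Then P(1) = h·(−n² + 7n − 8)/24 + C/12 + (n − 3). -/

import Mathlib

/-!
Write `n = m + 4`, `R = (X + 1) ⋯ (X + m)` and `Q = X⁴ + aX³ + bX² + cX + d`, so that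
`P = h / n! · R · Q`. Since `R(-(m + 1) - X) = (-1)ᵐ R(X)`, the symmetry of `P` says exactly that
`Q` is invariant under `X ↦ -(m + 1) - X`, which forces `a = 2(m + 1)` and
`c = (m + 1)(b - (m + 1)²)`. The value `P(0) = 1` gives `hd = (m + 1)(m + 2)(m + 3)(m + 4)`, and
the coefficient of `X^(m + 2)`, computed from the first two elementary symmetric functions of
`1, …, m`, gives `b` in terms of `K`. Substituting everything into
`P(1) = h (1 + a + b + c + d) / ((m + 2)(m + 3)(m + 4))` yields the formula.
-/

open Polynomial Finset

section CommRing

variable {R : Type*} [CommRing R]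

theorem eval_zero_prod_Icc_X_add (m : ℕ) :
    (∏ j ∈ Icc 1 m, (X + C (j : R))).eval 0 = (m.factorial : R) := by
  rw [← prod_Ico_id_eq_factorial, Nat.cast_prod, Ico_add_one_right_eq_Icc]
  simp [eval_prod]

theorem eval_one_prod_Icc_X_add (m : ℕ) :
    (∏ j ∈ Icc 1 m, (X + C (j : R))).eval 1 = ((m + 1).factorial : R) := by
  induction m with
  | zero => simp
  | succ m ih =>
    rw [prod_Icc_succ_top (by omega), eval_mul, ih, Nat.factorial_succ (m + 1)]
    simp only [eval_add, eval_X, eval_C]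
    push_cast; ring

theorem prod_Icc_X_add_comp_neg_sub (m : ℕ) :
    (∏ j ∈ Icc 1 m, (X + C (j : R))).comp (-C ((m : R) + 1) - X) =
      (-1) ^ m * ∏ j ∈ Icc 1 m, (X + C (j : R)) := by
  have factor : ∀ j ∈ Icc 1 m, (X + C (j : R)).comp (-C ((m : R) + 1) - X) =
      -(X + C ((m + 1 - j : ℕ) : R)) := by
    intro j hj
    rw [Nat.cast_sub (by simp at hj; omega)]
    simp only [add_comp, X_comp, C_comp, map_sub, map_add, Nat.cast_add, Nat.cast_one]
    ring
  rw [Polynomial.prod_comp, prod_congr rfl factor, prod_neg, Nat.card_Icc, Nat.add_sub_cancel,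
    ← Ico_add_one_right_eq_Icc, prod_Ico_reflect (fun j ↦ X + C (j : R)) _ (by omega)]
  simp

theorem natDegree_prod_Icc_X_add [Nontrivial R] (m : ℕ) :
    (∏ j ∈ Icc 1 m, (X + C (j : R))).natDegree = m := by
  rw [natDegree_prod_of_monic _ _ fun j _ ↦ monic_X_add_C _]
  simp only [natDegree_X_add_C, sum_const, Nat.card_Icc, smul_eq_mul, mul_one, Nat.add_sub_cancel]

end CommRing

theorem comp_neg_sub_eq_self_of_C_mul_prod_Icc_X_add_mul {K : Type*} [Field K] {c : K}
    (hc : c ≠ 0) (m : ℕ) (q : K[X])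
    (h : C c * (∏ j ∈ Icc 1 m, (X + C (j : K))) * q =
      (-1) ^ m * (C c * (∏ j ∈ Icc 1 m, (X + C (j : K))) * q).comp (-C ((m : K) + 1) - X)) :
    q.comp (-C ((m : K) + 1) - X) = q := by
  have hne : C c * ∏ j ∈ Icc 1 m, (X + C (j : K)) ≠ 0 :=
    mul_ne_zero (C_ne_zero.mpr hc) (monic_prod_of_monic _ _ fun j _ ↦ monic_X_add_C _).ne_zero
  refine (mul_left_cancel₀ hne ?_).symm
  have sign : ((-1) ^ m * (-1) ^ m : K[X]) = 1 := by
    rw [← mul_pow, neg_one_mul, neg_neg, one_pow]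
  rw [h, mul_comp, mul_comp, C_comp, prod_Icc_X_add_comp_neg_sub]
  linear_combination
    (C c * (∏ j ∈ Icc 1 m, (X + C (j : K))) * q.comp (-C ((m : K) + 1) - X)) * sign

section Field

variable {K : Type*} [Field K] [CharZero K]

/-- `m (m + 1) / 2` and `(m - 1) m (m + 1) (3m + 2) / 24` are the first two elementary symmetric
functions of `1, …, m`. -/
theorem coeff_prod_Icc_X_add_mul (q : K[X]) (k : ℕ) (hq : q.natDegree ≤ k + 2) (m : ℕ) :
    ((∏ j ∈ Icc 1 m, (X + C (j : K))) * q).coeff (m + k + 2) = q.coeff (k + 2) ∧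
    ((∏ j ∈ Icc 1 m, (X + C (j : K))) * q).coeff (m + k + 1) =
      q.coeff (k + 1) + m * (m + 1) / 2 * q.coeff (k + 2) ∧
    ((∏ j ∈ Icc 1 m, (X + C (j : K))) * q).coeff (m + k) =
      q.coeff k + m * (m + 1) / 2 * q.coeff (k + 1) +
        (m - 1) * m * (m + 1) * (3 * m + 2) / 24 * q.coeff (k + 2) := by
  induction m with
  | zero => simp
  | succ m ih =>
    set T := (∏ j ∈ Icc 1 m, (X + C (j : K))) * q
    have hT : (∏ j ∈ Icc 1 (m + 1), (X + C (j : K))) * q = T * X + C ((m : K) + 1) * T := by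
      rw [prod_Icc_succ_top (by omega)]
      push_cast; ring
    have coeff_succ (i : ℕ) : (T * X + C ((m : K) + 1) * T).coeff (i + 1) =
        T.coeff i + (m + 1) * T.coeff (i + 1) := by
      rw [coeff_add, coeff_mul_X, coeff_C_mul]
    have top : T.coeff (m + k + 3) = 0 := by
      refine coeff_eq_zero_of_natDegree_lt ((natDegree_mul_le).trans_lt ?_)
      rw [natDegree_prod_Icc_X_add]
      omega
    obtain ⟨h2, h1, h0⟩ := ih
    rw [hT, show m + 1 + k + 2 = (m + k + 2) + 1 by ring,
      show m + 1 + k + 1 = (m + k + 1) + 1 by ring, show m + 1 + k = (m + k) + 1 by ring,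
      coeff_succ, coeff_succ, coeff_succ, top, h2, h1, h0]
    push_cast
    exact ⟨by ring, by ring, by ring⟩

end Field

theorem quartic_comp_neg_sub_eq_self {K : Type*} [Field K] [CharZero K] {u a b c d : K}
    (h : (X ^ 4 + C a * X ^ 3 + C b * X ^ 2 + C c * X + C d).comp (-C u - X) =
      X ^ 4 + C a * X ^ 3 + C b * X ^ 2 + C c * X + C d) :
    a = 2 * u ∧ c = b * u - u ^ 3 := by
  have expand : (X ^ 4 + C a * X ^ 3 + C b * X ^ 2 + C c * X + C d).comp (-C u - X) =
      X ^ 4 + C (4 * u - a) * X ^ 3 + C (6 * u ^ 2 - 3 * a * u + b) * X ^ 2 +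
        C (4 * u ^ 3 - 3 * a * u ^ 2 + 2 * b * u - c) * X +
        C (u ^ 4 - a * u ^ 3 + b * u ^ 2 - c * u + d) := by
    simp only [add_comp, mul_comp, X_pow_comp, C_comp, X_comp, map_sub, map_add, map_mul, map_pow,
      map_ofNat]
    ring
  rw [expand] at h
  have h3 := congrArg (coeff · 3) h
  have h1 := congrArg (coeff · 1) h
  simp only [coeff_add, coeff_C_mul, coeff_X_pow, coeff_X, coeff_C] at h3 h1
  norm_num at h3 h1
  have ha : a = 2 * u := by linear_combination -h3 / 2
  exact ⟨ha, by linear_combination -h1 / 2 - 3 / 2 * u ^ 2 * ha⟩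

theorem chi_of_H_formula_general (n : ℕ) (hn : 4 ≤ n) (h : ℚ) (K : ℚ)
    (a b c d : ℚ) (P : ℚ[X])
    (hP : P = C (h / (n.factorial : ℚ)) *
      (∏ j ∈ Finset.Icc 1 (n - 4), (X + C (j : ℚ))) *
      (X ^ 4 + C a * X ^ 3 + C b * X ^ 2 + C c * X + C d))
    (hsym : P = (-1 : ℚ[X]) ^ n * P.comp (-(C ((n : ℚ) - 3)) - X))
    (hcoeff : P.coeff (n - 2) =
      (((n : ℚ) - 3) ^ 2 * h + K) / (12 * ((n - 2).factorial : ℚ)))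
    (heval : P.eval 0 = 1) :
    P.eval 1 = h * (-(n : ℚ) ^ 2 + 7 * (n : ℚ) - 8) / 24 + K / 12 + ((n : ℚ) - 3) := by
  obtain ⟨m, rfl⟩ : ∃ m, n = m + 4 := ⟨n - 4, by omega⟩
  rw [Nat.add_sub_cancel] at hP
  subst hP
  have hd : h * d = (m + 1) * (m + 2) * (m + 3) * (m + 4) := by
    simp only [eval_mul, eval_C, eval_zero_prod_Icc_X_add, eval_add, eval_pow, eval_X] at heval
    push_cast [Nat.factorial_succ] at heval
    field_simp at heval
    linear_combination heval
  have hh : h ≠ 0 := left_ne_zero_of_mul (by rw [hd]; positivity)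
  have hQ : (X ^ 4 + C a * X ^ 3 + C b * X ^ 2 + C c * X + C d).comp (-C ((m : ℚ) + 1) - X) =
      X ^ 4 + C a * X ^ 3 + C b * X ^ 2 + C c * X + C d := by
    rw [show ((m + 4 : ℕ) : ℚ) - 3 = m + 1 by push_cast; ring, pow_add,
      show (-1 : ℚ[X]) ^ 4 = 1 by norm_num, mul_one] at hsym
    exact comp_neg_sub_eq_self_of_C_mul_prod_Icc_X_add_mul
      (div_ne_zero hh (by positivity)) m _ hsym
  obtain ⟨ha, hc⟩ := quartic_comp_neg_sub_eq_self hQ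
  have hb : 12 * h * ((m - 1) * m * (m + 1) * (3 * m + 2) / 24 + m * (m + 1) / 2 * a + b) =
      (m + 3) * (m + 4) * ((m + 1) ^ 2 * h + K) := by
    rw [show m + 4 - 2 = m + 2 from rfl, mul_assoc, coeff_C_mul,
      (coeff_prod_Icc_X_add_mul _ 2 (by compute_degree!) m).2.2] at hcoeff
    simp only [coeff_add, coeff_C_mul, coeff_X_pow, coeff_X, coeff_C] at hcoeff
    norm_num [Nat.factorial_succ] at hcoeff
    field_simp at hcoeff
    linear_combination hcoeff / 48
  simp only [eval_mul, eval_C, eval_one_prod_Icc_X_add, eval_add, eval_pow, eval_X]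
  push_cast [Nat.factorial_succ]
  field_simp
  linear_combination
    288 * (hd + (m + 2) / 12 * hb + (h - h * m * (m + 1) * (m + 2) / 2) * ha + h * hc)

theorem chi_of_H_formula (n : ℕ) (hn : 4 ≤ n) (h : ℚ) (hh : h ≠ 0) (K : ℚ)
    (a b c d : ℚ) (P : ℚ[X])
    (hP : P = C (h / (n.factorial : ℚ)) *
      (∏ j ∈ Finset.Icc 1 (n - 4), (X + C (j : ℚ))) *
      (X ^ 4 + C a * X ^ 3 + C b * X ^ 2 + C c * X + C d))
    (hsym : P = (-1 : ℚ[X]) ^ n * P.comp (-(C ((n : ℚ) - 3)) - X))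
    (hcoeff : P.coeff (n - 2) =
      (((n : ℚ) - 3) ^ 2 * h + K) / (12 * ((n - 2).factorial : ℚ)))
    (heval : P.eval 0 = 1) :
    P.eval 1 = h * (-(n : ℚ) ^ 2 + 7 * (n : ℚ) - 8) / 24 + K / 12 + ((n : ℚ) - 3) :=
  chi_of_H_formula_general n hn h K a b c d P hP hsym hcoeff heval
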